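/- arXiv:1406.3764 — 3 statements merged into one kernel-verified Lean document; each statement's English description precedes it below -/
import Mathlib

section
/- Let X_t be a simple random walk on a nondecreasing sequence of connected growing graphs G_t ⊆ Ḡ, with X_0 = 0 and B^Ḡ(0,1) ⊆ G_0. Then on the event {X_t = 0 only finitely often} (transience of 0), almost surely the graph distance d^{G_t}(0, X_t) tends to infinity as t → ∞. -/
/-!
Induction on `r`: almost surely on the event that `o` is visited finitely often, the walk is
within `G_t`-distance `r` of `o` only finitely often. If `0 < d^{G_t}(o, X_t) ≤ r + 1`, then `X_t`
has a `G_t`-neighbour `y` with `d^{G_t}(o, y) ≤ r`, and as the graphs only grow, the step to `y`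
brings the walk within distance `r` at time `t + 1`. The conditional probability of that step,
`1 / deg_{G_t}(X_t)`, is bounded below by some `δ > 0` since `X_t` lies in the finite ball
`B^Ḡ(o, r + 1)`. By Lévy's conditional Borel–Cantelli lemma an event occurring finitely often has
conditional probability `≥ δ` only finitely often, so such times `t` are finitely many.
-/

open MeasureTheory ProbabilityTheory Filter Set
open scoped ENNReal Classical Pointwise

namespace MonotoneWalk

variable {V : Type*}

/-- The weight of a finite walk in a graph: the product, over the vertices from which
the successive steps are taken, of the inverse degree. This is the probability that
simple random walk follows precisely this walk. -/
noncomputable def walkWeight (G : SimpleGraph V) {u v : V} (w : G.Walk u v) : ℝ≥0∞ :=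
  (w.support.dropLast.map fun x => (((G.neighborSet x).ncard : ℝ≥0∞))⁻¹).prod

/-- Probability that simple random walk on `G` started at `y` visits `o` before entering
the set `B` (counting only strict predecessors of the hitting time of `o`). -/
noncomputable def hitProbBefore (G : SimpleGraph V) (y o : V) (B : Set V) : ℝ≥0∞ :=
  ∑' w : {w : G.Walk y o // ∀ x ∈ w.support.dropLast, x ≠ o ∧ x ∉ B},
    walkWeight G w.1

/-- Probability that simple random walk on `G` started at `y` ever visits `o`. -/
noncomputable def hitProb (G : SimpleGraph V) (y o : V) : ℝ≥0∞ :=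
  hitProbBefore G y o ∅

/-- Probability that simple random walk on `G` started at `o` returns to `o`
(first-return decomposition). -/
noncomputable def returnProb (G : SimpleGraph V) (o : V) : ℝ≥0∞ :=
  ∑' w : {w : G.Walk o o // w.length ≠ 0 ∧ ∀ x ∈ w.support.tail.dropLast, x ≠ o},
    walkWeight G w.1

/-- Simple random walk on the fixed graph `G` is transient (at the vertex `o`). -/
def SRWTransient (G : SimpleGraph V) (o : V) : Prop := returnProb G o < 1

/-- The boundary `∂H` of a subgraph `H ⊆ Ḡ` : vertices of `H` whose degree in `H`
is smaller than their degree in `Ḡ`. -/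
def Boundary (Gbar : SimpleGraph V) (H : Gbar.Subgraph) : Set V :=
  {z | z ∈ H.verts ∧ (H.neighborSet z).ncard < (Gbar.neighborSet z).ncard}

/-- The subgraph of `Ḡ` induced by a set `s` of sites (all edges of `Ḡ` between
sites of `s` are present). -/
def siteSubgraph (Gbar : SimpleGraph V) (s : Set V) : Gbar.Subgraph where
  verts := s
  Adj x y := Gbar.Adj x y ∧ x ∈ s ∧ y ∈ s
  adj_sub h := h.1
  edge_vert h := h.2.1
  symm := ⟨fun x y h => ⟨h.1.symm, h.2.2, h.2.1⟩⟩

/-- The subgraph of `Ḡ` consisting of all edges of the closed ball of radius 1 around `z`. -/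
def ballSubgraph (Gbar : SimpleGraph V) (z : V) : Gbar.Subgraph :=
  siteSubgraph Gbar {x | Gbar.dist z x ≤ 1}

/-- The nearest-neighbor lattice graph on `ℤ^d`. -/
def latticeGraph (d : ℕ) : SimpleGraph (Fin d → ℤ) where
  Adj x y := (∑ i, |x i - y i|) = 1
  symm := by
    constructor
    intro x y h
    simpa only [abs_sub_comm] using h
  loopless := by
    constructor
    intro x h
    simp at h

/-- The `i`-th unit vector of `ℤ^d`. -/
def eVec (d : ℕ) (i : Fin d) : Fin d → ℤ := fun j => if j = i then 1 else 0

lemma lattice_adj_add (d : ℕ) (z : Fin d → ℤ) (i : Fin d) :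
    (latticeGraph d).Adj z (z + eVec d i) := by
  show (∑ j, |z j - (z j + eVec d i j)|) = 1
  have : ∀ j, |z j - (z j + eVec d i j)| = if j = i then 1 else 0 := by
    intro j
    by_cases h : j = i <;> simp [eVec, h]
  rw [Finset.sum_congr rfl fun j _ => this j]
  simp

lemma lattice_adj_sub (d : ℕ) (z : Fin d → ℤ) (i : Fin d) :
    (latticeGraph d).Adj z (z - eVec d i) := by
  show (∑ j, |z j - (z j - eVec d i j)|) = 1
  have : ∀ j, |z j - (z j - eVec d i j)| = if j = i then 1 else 0 := by
    intro j
    by_cases h : j = i <;> simp [eVec, h]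
  rw [Finset.sum_congr rfl fun j _ => this j]
  simp

/-- The subgraph of `ℤ²` consisting of the three right/up/down edges at `z`. -/
noncomputable def rud (z : Fin 2 → ℤ) : (latticeGraph 2).Subgraph :=
  SimpleGraph.subgraphOfAdj _ (lattice_adj_add 2 z 0) ⊔
    SimpleGraph.subgraphOfAdj _ (lattice_adj_add 2 z 1) ⊔
    SimpleGraph.subgraphOfAdj _ (lattice_adj_sub 2 z 1)


/-- Simple random walk on a nondecreasing sequence of connected growing subgraphs
`G_t ⊆ Ḡ`, starting at `X_0 = o` with `B^Ḡ(o,1) ⊆ G_0`; given the past, `X_{t+1}` is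
uniformly distributed among the neighbors of `X_t` in `G_t`. -/
structure GrowingSRW (Gbar : SimpleGraph V) (o : V) {Ω : Type*}
    (mΩ : MeasurableSpace Ω) (μ : Measure Ω) where
  /-- the filtration -/
  F : Filtration ℕ mΩ
  /-- the walk -/
  X : ℕ → Ω → V
  /-- the growing graphs -/
  G : ℕ → Ω → Gbar.Subgraph
  X_adapted : ∀ t (v : V), MeasurableSet[F t] {ω | X t ω = v}
  G_adj_adapted : ∀ t (x y : V), MeasurableSet[F t] {ω | (G t ω).Adj x y}
  G_verts_adapted : ∀ t (x : V), MeasurableSet[F t] {ω | x ∈ (G t ω).verts}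
  mono : ∀ ω t, G t ω ≤ G (t + 1) ω
  conn : ∀ ω t, (G t ω).Connected
  X_mem : ∀ ω t, X t ω ∈ (G t ω).verts
  X_zero : ∀ ω, X 0 ω = o
  ball_sub : ∀ ω (x : V), Gbar.Adj o x → (G 0 ω).Adj o x
  step : ∀ t (v : V),
    μ[(fun ω => if X (t + 1) ω = v then (1 : ℝ) else 0) | F t]
      =ᵐ[μ] fun ω =>
        if (G t ω).Adj (X t ω) v
          then (((G t ω).neighborSet (X t ω)).ncard : ℝ)⁻¹ else 0

namespace GrowingSRW

variable {Gbar : SimpleGraph V} {o : V} {Ω : Type*} {mΩ : MeasurableSpace Ω}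
  {μ : Measure Ω}

/-- `σ_n` given `η_n` : the first time `t ≥ η_n` at which `X_t ∈ ∂G_{η_n}`
(`⊤` if there is no such time, or if `η_n = ⊤`). -/
noncomputable def sigmaOf (W : GrowingSRW Gbar o mΩ μ) (ω : Ω) (η : ℕ∞) : ℕ∞ :=
  sInf ((fun s : ℕ => (s : ℕ∞)) ''
    {s : ℕ | η ≤ (s : ℕ∞) ∧ W.X s ω ∈ Boundary Gbar (W.G η.toNat ω)})

/-- `η_{n+1}` given `σ_n` : the first time `t ≥ σ_n` at which `X_t ∉ ∂G_t`. -/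
noncomputable def nextEta (W : GrowingSRW Gbar o mΩ μ) (ω : Ω) (σ : ℕ∞) : ℕ∞ :=
  sInf ((fun s : ℕ => (s : ℕ∞)) ''
    {s : ℕ | σ ≤ (s : ℕ∞) ∧ W.X s ω ∉ Boundary Gbar (W.G s ω)})

/-- The pair `(η_n, σ_n)` of stopping times, defined recursively, with `η_0 = 0`. -/
noncomputable def times (W : GrowingSRW Gbar o mΩ μ) (ω : Ω) : ℕ → ℕ∞ × ℕ∞
  | 0 => (0, W.sigmaOf ω 0)
  | n + 1 =>
      let η := W.nextEta ω (W.times ω n).2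
      (η, W.sigmaOf ω η)

/-- `η_n`. -/
noncomputable def eta (W : GrowingSRW Gbar o mΩ μ) (n : ℕ) (ω : Ω) : ℕ∞ :=
  (W.times ω n).1

/-- `σ_n`. -/
noncomputable def sigma (W : GrowingSRW Gbar o mΩ μ) (n : ℕ) (ω : Ω) : ℕ∞ :=
  (W.times ω n).2

/-- The event `A_n = {∃ s ∈ [η_n, σ_n) : X_s = o}`. -/
def eventA (W : GrowingSRW Gbar o mΩ μ) (n : ℕ) : Set Ω :=
  {ω | ∃ s : ℕ, W.eta n ω ≤ (s : ℕ∞) ∧ (s : ℕ∞) < W.sigma n ω ∧ W.X s ω = o}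

end GrowingSRW

/-- The σ-algebra `F_τ` of the past up to a (possibly infinite) stopping time `τ`. -/
def stoppedSigma {Ω : Type*} {mΩ : MeasurableSpace Ω} (F : Filtration ℕ mΩ)
    (τ : Ω → ℕ∞) : MeasurableSpace Ω :=
  MeasurableSpace.generateFrom
    {s | MeasurableSet[mΩ] s ∧ ∀ n : ℕ, MeasurableSet[F n] (s ∩ {ω | τ ω ≤ (n : ℕ∞)})}

/-- `p_n = P(A_n | F_{η_n})`. -/
noncomputable def GrowingSRW.p {Gbar : SimpleGraph V} {o : V} {Ω : Type*}
    {mΩ : MeasurableSpace Ω} {μ : Measure Ω} (W : GrowingSRW Gbar o mΩ μ) (n : ℕ) :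
    Ω → ℝ :=
  μ[(W.eventA n).indicator (fun _ => (1 : ℝ)) | stoppedSigma W.F (W.eta n)]


/-- An *extended simple random walk* interacting with growing subgraphs
`G_t ⊆ Ḡ`: it follows the steps of simple random walk on `Ḡ` except that whenever
`Y_t ∈ ∂G_t`, any `F_t`-measurable mechanism may choose
`Y_{t+1} ∈ G_t ∩ C(Y_t)` where `C(x) = B^Ḡ(x, r(x))`, for a fixed function `r`
with `1 ≤ r(x) ≤ c · d^Ḡ(x, o)` and a fixed constant `c < 1`. -/
structure ExtSRW (Gbar : SimpleGraph V) (o : V) {Ω : Type*}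
    (mΩ : MeasurableSpace Ω) (μ : Measure Ω) where
  F : Filtration ℕ mΩ
  /-- the walk -/
  Y : ℕ → Ω → V
  /-- the growing graphs -/
  G : ℕ → Ω → Gbar.Subgraph
  /-- radius of the ball `C(x)` -/
  r : V → ℕ
  /-- the constant `c < 1` -/
  c : ℝ
  hc : c < 1
  hr_one : ∀ x, 1 ≤ r x
  hr_le : ∀ x, x ≠ o → (r x : ℝ) ≤ c * (Gbar.dist x o)
  Y_adapted : ∀ t (v : V), MeasurableSet[F t] {ω | Y t ω = v}
  G_adj_adapted : ∀ t (x y : V), MeasurableSet[F t] {ω | (G t ω).Adj x y}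
  G_verts_adapted : ∀ t (x : V), MeasurableSet[F t] {ω | x ∈ (G t ω).verts}
  mono : ∀ ω t, G t ω ≤ G (t + 1) ω
  conn : ∀ ω t, (G t ω).Connected
  Y_mem : ∀ ω t, Y t ω ∈ (G t ω).verts
  Y_zero : ∀ ω, Y 0 ω = o
  ball_sub : ∀ ω (x : V), Gbar.Adj o x → (G 0 ω).Adj o x
  /-- off the boundary, the walk takes simple random walk steps on `Ḡ` -/
  step_free : ∀ t (v : V), ∀ᵐ ω ∂μ,
    Y t ω ∉ Boundary Gbar (G t ω) →
      (μ[(fun ω' => if Y (t + 1) ω' = v then (1 : ℝ) else 0) | F t]) ω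
        = if Gbar.Adj (Y t ω) v
            then ((Gbar.neighborSet (Y t ω)).ncard : ℝ)⁻¹ else 0
  /-- on the boundary, the next position lies in `G_t ∩ C(Y_t)` -/
  step_bdry : ∀ t ω, Y t ω ∈ Boundary Gbar (G t ω) →
    Y (t + 1) ω ∈ (G t ω).verts ∧ Gbar.dist (Y t ω) (Y (t + 1) ω) ≤ r (Y t ω)

namespace ExtSRW

variable {Gbar : SimpleGraph V} {o : V} {Ω : Type*} {mΩ : MeasurableSpace Ω}
  {μ : Measure Ω}

/-- The *open by touch* (OBT) rule: `G_{t+1} = G_t` except when `Y_t ∈ ∂G_t`, at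
which times all edges of `B^Ḡ(Y_t, 1)` are added to `G_{t+1}`. -/
def IsOBT (W : ExtSRW Gbar o mΩ μ) : Prop :=
  ∀ t ω,
    (W.Y t ω ∈ Boundary Gbar (W.G t ω) →
      W.G (t + 1) ω = W.G t ω ⊔ ballSubgraph Gbar (W.Y t ω)) ∧
    (W.Y t ω ∉ Boundary Gbar (W.G t ω) → W.G (t + 1) ω = W.G t ω)

/-- The *partially open by touch* (POBT) rule: `G_{t+1} = G_t` except possibly when
`Y_t ∈ ∂G_t`, at which times, with (conditional) probability uniformly bounded away
from zero, one or more of the edges of `Ḡ` adjacent to `Y_t` are added to `G_{t+1}`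
(and all added edges are adjacent to `Y_t`). -/
def IsPOBT (W : ExtSRW Gbar o mΩ μ) : Prop :=
  (∀ t ω, W.Y t ω ∉ Boundary Gbar (W.G t ω) → W.G (t + 1) ω = W.G t ω) ∧
  (∀ t ω x y, (W.G (t + 1) ω).Adj x y → ¬ (W.G t ω).Adj x y →
      x = W.Y t ω ∨ y = W.Y t ω) ∧
  ∃ ε : ℝ, 0 < ε ∧ ∀ t, ∀ᵐ ω ∂μ,
    W.Y t ω ∈ Boundary Gbar (W.G t ω) →
      ε ≤ (μ[(fun ω' => if ∃ x, (W.G (t + 1) ω').Adj (W.Y t ω') x ∧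
              ¬ (W.G t ω').Adj (W.Y t ω') x then (1 : ℝ) else 0) | W.F t]) ω

end ExtSRW

/-- The *expanding glassy spheres* (EGS) interaction with balls `B̄_k` (given by the
vertex sets `Bset k`) and prescribed hit counts `N k`: a simple random walk `Z_t`
confined to `B̄_{lvl t}`, starting at `Z_0 = o` with level `lvl 0 = 1`, where the level
increases by one precisely when the walk has made `N k` visits to `∂B̄_k` since the
level last changed. -/
structure EGS (Gbar : SimpleGraph V) (o : V) (Bset : ℕ → Set V) (N : ℕ → ℕ)
    {Ω : Type*} (mΩ : MeasurableSpace Ω) (μ : Measure Ω) where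
  F : Filtration ℕ mΩ
  /-- the walk -/
  Z : ℕ → Ω → V
  /-- the current level `k`, so that the current ball is `B̄_{lvl t}` -/
  lvl : ℕ → Ω → ℕ
  Z_adapted : ∀ t (v : V), MeasurableSet[F t] {ω | Z t ω = v}
  Z_zero : ∀ ω, Z 0 ω = o
  lvl_zero : ∀ ω, lvl 0 ω = 1
  lvl_succ : ∀ t ω, lvl (t + 1) ω =
    if {s | s ≤ t ∧ lvl s ω = lvl t ω ∧
          Z s ω ∈ Boundary Gbar (siteSubgraph Gbar (Bset (lvl t ω)))}.ncard
        = N (lvl t ω)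
      then lvl t ω + 1 else lvl t ω
  Z_mem : ∀ ω t, Z t ω ∈ Bset (lvl t ω)
  step : ∀ t (v : V),
    μ[(fun ω => if Z (t + 1) ω = v then (1 : ℝ) else 0) | F t]
      =ᵐ[μ] fun ω =>
        if (siteSubgraph Gbar (Bset (lvl t ω))).Adj (Z t ω) v
          then (((siteSubgraph Gbar (Bset (lvl t ω))).neighborSet (Z t ω)).ncard : ℝ)⁻¹
          else 0


/-- A *remotely open by touch* (ROBT) interaction model on `ℤ^d` : a simple random
walk `R_t` on nondecreasing connected growing domains `D_t ⊆ ℤ^d` starting at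
`R_0 = 0`, such that the domain grows only when `R_t ∈ ∂D_t`, the number of edges
added at each such time being uniformly bounded. -/
structure ROBT (d : ℕ) {Ω : Type*} (mΩ : MeasurableSpace Ω) (μ : Measure Ω) where
  F : Filtration ℕ mΩ
  /-- the walk -/
  R : ℕ → Ω → (Fin d → ℤ)
  /-- the growing domains -/
  D : ℕ → Ω → (latticeGraph d).Subgraph
  R_adapted : ∀ t (v : Fin d → ℤ), MeasurableSet[F t] {ω | R t ω = v}
  D_adj_adapted : ∀ t (x y : Fin d → ℤ), MeasurableSet[F t] {ω | (D t ω).Adj x y}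
  D_verts_adapted : ∀ t (x : Fin d → ℤ), MeasurableSet[F t] {ω | x ∈ (D t ω).verts}
  mono : ∀ ω t, D t ω ≤ D (t + 1) ω
  conn : ∀ ω t, (D t ω).Connected
  R_mem : ∀ ω t, R t ω ∈ (D t ω).verts
  R_zero : ∀ ω, R 0 ω = 0
  grow_only_at_bdry : ∀ t ω,
    R t ω ∉ Boundary (latticeGraph d) (D t ω) → D (t + 1) ω = D t ω
  bounded_growth : ∃ M : ℕ, ∀ t ω,
    ((D (t + 1) ω).edgeSet \ (D t ω).edgeSet).ncard ≤ M
  step : ∀ t (v : Fin d → ℤ),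
    μ[(fun ω => if R (t + 1) ω = v then (1 : ℝ) else 0) | F t]
      =ᵐ[μ] fun ω =>
        if (D t ω).Adj (R t ω) v
          then (((D t ω).neighborSet (R t ω)).ncard : ℝ)⁻¹ else 0

/-- The lattice points of the dilated set `f • K ⊆ ℝ^d`. -/
def latticePts (d : ℕ) (f : ℝ) (K : Set (Fin d → ℝ)) : Set (Fin d → ℤ) :=
  {x | (fun i => (x i : ℝ)) ∈ f • K}

/-- `K ⊆ ℝ^d` is a `γ`-*almost regular shape* for growing domains `D_t` in `ℤ^d` :
`D_t ⊇ f(t)K ∩ ℤ^d` for all large `t` and some nondecreasing `f ≥ 1`, such that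
`d^{D_t}(z, f(t)K) ≤ γ log f(t)` for all `z ∈ D_t`. -/
def AlmostRegular (d : ℕ) (γ : ℝ) (K : Set (Fin d → ℝ))
    (Dp : ℕ → (latticeGraph d).Subgraph) : Prop :=
  ∃ f : ℕ → ℝ, Monotone f ∧ (∀ t, 1 ≤ f t) ∧ ∃ T : ℕ, ∀ t ≥ T,
    (∀ x ∈ latticePts d (f t) K, x ∈ (Dp t).verts) ∧
    ∀ z ∈ (Dp t).verts, ∃ y ∈ latticePts d (f t) K,
      (Dp t).spanningCoe.Reachable z y ∧
        (((Dp t).spanningCoe.dist z y : ℝ)) ≤ γ * Real.log (f t)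

/-- The Euclidean unit ball of `ℝ^d`. -/
def euclBall (d : ℕ) : Set (Fin d → ℝ) := {v | (∑ i, (v i) ^ 2) ≤ 1}


/-- The *first open by touch* walk on `ℤ²` opening only the right/up/down edges:
upon the first visit to a site it opens the three right/up/down adjacent edges and
stays put for one step; at all other times it moves as simple random walk on the
current domain. -/
structure FOBT {Ω : Type*} (mΩ : MeasurableSpace Ω) (μ : Measure Ω) where
  F : Filtration ℕ mΩ
  /-- the walk -/
  E : ℕ → Ω → (Fin 2 → ℤ)
  /-- the growing domains -/
  D : ℕ → Ω → (latticeGraph 2).Subgraph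
  E_adapted : ∀ t (v : Fin 2 → ℤ), MeasurableSet[F t] {ω | E t ω = v}
  D_adj_adapted : ∀ t (x y : Fin 2 → ℤ), MeasurableSet[F t] {ω | (D t ω).Adj x y}
  mono : ∀ ω t, D t ω ≤ D (t + 1) ω
  E_mem : ∀ ω t, E t ω ∈ (D t ω).verts
  E_zero : ∀ ω, E 0 ω = 0
  /-- at a first visit : open the right/up/down edges, and stay put for one step -/
  first_visit : ∀ t ω, (∀ s < t, E s ω ≠ E t ω) →
    E (t + 1) ω = E t ω ∧ D (t + 1) ω = D t ω ⊔ rud (E t ω)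
  /-- otherwise the domain does not change … -/
  non_first_visit : ∀ t ω, (∃ s < t, E s ω = E t ω) → D (t + 1) ω = D t ω
  /-- … and the walk takes a simple random walk step on the current domain -/
  step : ∀ t (v : Fin 2 → ℤ), ∀ᵐ ω ∂μ,
    (∃ s < t, E s ω = E t ω) →
      (μ[(fun ω' => if E (t + 1) ω' = v then (1 : ℝ) else 0) | F t]) ω
        = if (D t ω).Adj (E t ω) v
            then (((D t ω).neighborSet (E t ω)).ncard : ℝ)⁻¹ else 0

/-- A *probing simple random walk* (PSRW) on `ℤ^d` : starting at `K_0 = 0` with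
domain `A_0 = {0}`, at each time `t` it sends an `F_t`-adapted number `m t` of probes,
each adding precisely one site to the domain (all edges of `ℤ^d` connecting added sites
to the existing domain being opened), after which the walk moves to a uniformly chosen
neighbor of `K_t` in the new domain. -/
structure PSRW (d : ℕ) {Ω : Type*} (mΩ : MeasurableSpace Ω) (μ : Measure Ω) where
  F : Filtration ℕ mΩ
  /-- the walk -/
  K : ℕ → Ω → (Fin d → ℤ)
  /-- the (vertex sets of the) growing domains -/
  A : ℕ → Ω → Set (Fin d → ℤ)
  /-- the number of probes sent at each time -/
  m : ℕ → Ω → ℕ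
  K_adapted : ∀ t (v : Fin d → ℤ), MeasurableSet[F t] {ω | K t ω = v}
  A_adapted : ∀ t (x : Fin d → ℤ), MeasurableSet[F (t + 1)] {ω | x ∈ A (t + 1) ω}
  m_adapted : ∀ t (n : ℕ), MeasurableSet[F t] {ω | m t ω = n}
  A_zero : ∀ ω, A 0 ω = {0}
  K_zero : ∀ ω, K 0 ω = 0
  mono : ∀ ω t, A t ω ⊆ A (t + 1) ω
  add_fin : ∀ ω t, (A (t + 1) ω \ A t ω).Finite
  add_card : ∀ ω t, (A (t + 1) ω \ A t ω).ncard = m t ω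
  K_mem : ∀ ω t, K t ω ∈ A t ω
  step : ∀ t (v : Fin d → ℤ),
    μ[(fun ω => if K (t + 1) ω = v then (1 : ℝ) else 0)
        | (F t) ⊔ MeasurableSpace.generateFrom
            {s | ∃ x : Fin d → ℤ, s = {ω | x ∈ A (t + 1) ω}}]
      =ᵐ[μ] fun ω =>
        if (siteSubgraph (latticeGraph d) (A (t + 1) ω)).Adj (K t ω) v
          then (((siteSubgraph (latticeGraph d) (A (t + 1) ω)).neighborSet
                  (K t ω)).ncard : ℝ)⁻¹
          else 0

/-- The running average number of probes `m̄_t = t⁻¹ ∑_{s=1}^t m(s)`. -/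
noncomputable def PSRW.mbar {d : ℕ} {Ω : Type*} {mΩ : MeasurableSpace Ω}
    {μ : Measure Ω} (W : PSRW d mΩ μ) (t : ℕ) (ω : Ω) : ℝ :=
  (t : ℝ)⁻¹ * ∑ s ∈ Finset.Icc 1 t, (W.m s ω : ℝ)

/-- The probability that simple random walk on `ℤ^d` started at `x` first exits the
set `S` at the site `y`. -/
noncomputable def exitProb (d : ℕ) (S : Set (Fin d → ℤ)) (x y : Fin d → ℤ) : ℝ≥0∞ :=
  ∑' w : {w : (latticeGraph d).Walk x y // ∀ z ∈ w.support.dropLast, z ∈ S},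
    walkWeight (latticeGraph d) w.1

/-- A probing simple random walk with *unguided* probes: each probe performs an
independent simple random walk on `ℤ^d` from the current position `K_t` of the walker,
until it first exits the current domain, and the site where it exits (chosen according
to the hitting measure of the complement of the current domain) is added. Probes are
sent sequentially, each seeing the domain as enlarged by the previous probes. -/
structure UnguidedPSRW (d : ℕ) {Ω : Type*} (mΩ : MeasurableSpace Ω) (μ : Measure Ω)
    extends PSRW d mΩ μ where
  /-- `P t j` is the site added by the `j`-th probe sent at time `t` -/
  P : ℕ → ℕ → Ω → (Fin d → ℤ)
  probe_sets : ∀ t ω, A (t + 1) ω = A t ω ∪ {x | ∃ j < m t ω, P t j ω = x}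
  probe_new : ∀ t j ω, j < m t ω →
    P t j ω ∉ A t ω ∪ {x | ∃ i < j, P t i ω = x}
  /-- each probe site has the law of the exit site of simple random walk from `K_t`,
  out of the domain enlarged by the previously sent probes -/
  probe_law : ∀ t j (y : Fin d → ℤ),
    μ[(fun ω => if j < m t ω ∧ P t j ω = y then (1 : ℝ) else 0)
        | (F t) ⊔ MeasurableSpace.generateFrom
            {s | ∃ (i : ℕ) (x : Fin d → ℤ), i < j ∧ s = {ω | P t i ω = x}}]
      =ᵐ[μ] fun ω =>
        if j < m t ω ∧ y ∉ A t ω ∪ {x | ∃ i < j, P t i ω = x}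
          then (exitProb d (A t ω ∪ {x | ∃ i < j, P t i ω = x}) (K t ω) y).toReal
          else 0


/-- The set `C_k` of sites of the ball `B̄_k` at graph distance one from `∂B̄_k`. -/
noncomputable def CSet (Gbar : SimpleGraph V) (Bset : ℕ → Set V) (k : ℕ) : Set V :=
  {x | x ∈ Bset k ∧
    sInf ((fun y => Gbar.edist x y) ''
      Boundary Gbar (siteSubgraph Gbar (Bset k))) = 1}


end MonotoneWalk

namespace SimpleGraph

variable {V : Type*} {G : SimpleGraph V} {u v : V} {r : ℕ}

theorem edist_le_succ_iff :
    G.edist u v ≤ (r + 1 : ℕ) ↔ u = v ∨ ∃ w, G.Adj w v ∧ G.edist u w ≤ r := by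
  constructor
  · intro h
    by_cases huv : u = v
    · exact Or.inl huv
    obtain ⟨p, hp⟩ := exists_walk_of_edist_ne_top (ne_top_of_le_ne_top (ENat.natCast_ne_top _) h)
    cases hq : p.reverse with
    | nil => exact absurd rfl huv
    | @cons _ w _ hvw q =>
      have hlen : p.length = q.length + 1 := by
        simpa using congrArg Walk.length hq
      refine Or.inr ⟨w, hvw.symm, ?_⟩
      calc G.edist u w = G.edist w u := edist_comm
        _ ≤ q.length := edist_le q
        _ ≤ r := by
          have : p.length ≤ r + 1 := by exact_mod_cast hp ▸ h
          exact_mod_cast (by omega : q.length ≤ r)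
  · rintro (rfl | ⟨w, hwv, hw⟩)
    · simp
    calc G.edist u v ≤ G.edist u w + G.edist w v := G.edist_triangle
      _ ≤ r + 1 := by rw [edist_eq_one_iff_adj.mpr hwv]; gcongr
      _ = (r + 1 : ℕ) := by push_cast; rfl

variable [G.LocallyFinite]

theorem finite_setOf_edist_le (u : V) (r : ℕ) : {v | G.edist u v ≤ r}.Finite := by
  induction r with
  | zero => simp
  | succ r ih =>
    refine ((Set.finite_singleton u).union
      (ih.biUnion fun w _ => (G.neighborSet w).toFinite)).subset fun v hv => ?_
    rcases edist_le_succ_iff.mp hv with rfl | ⟨w, hwv, hw⟩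
    · exact Or.inl rfl
    · exact Or.inr (Set.mem_biUnion hw hwv)

theorem exists_ncard_neighborSet_le (u : V) (r : ℕ) :
    ∃ D : ℕ, ∀ v, G.edist u v ≤ r → (G.neighborSet v).ncard ≤ D :=
  let ⟨D, hD⟩ := ((finite_setOf_edist_le u r).image fun v => (G.neighborSet v).ncard).bddAbove
  ⟨D, fun v hv => hD ⟨v, hv, rfl⟩⟩

theorem measurableSet_setOf_edist_le {Ω : Type*} {m : MeasurableSpace Ω} {H : Ω → G.Subgraph}
    (hH : ∀ x y, MeasurableSet[m] {ω | (H ω).Adj x y}) (u : V) (r : ℕ) (v : V) :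
    MeasurableSet[m] {ω | (H ω).spanningCoe.edist u v ≤ r} := by
  induction r generalizing v with
  | zero =>
    simp only [Nat.cast_zero, nonpos_iff_eq_zero, edist_eq_zero_iff]
    exact MeasurableSet.const _
  | succ r ih =>
    have hset : {ω | (H ω).spanningCoe.edist u v ≤ (r + 1 : ℕ)} = {_ω | u = v} ∪
        ⋃ w ∈ G.neighborSet v, {ω | (H ω).Adj w v} ∩ {ω | (H ω).spanningCoe.edist u w ≤ r} := by
      ext ω
      simp only [Set.mem_ofPred_eq, Set.mem_union, Set.mem_iUnion, Set.mem_inter_iff,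
        exists_prop, edist_le_succ_iff, Subgraph.spanningCoe_adj, mem_neighborSet]
      exact or_congr_right ⟨fun ⟨w, hw, h⟩ => ⟨w, hw.adj_sub.symm, hw, h⟩,
        fun ⟨w, _, hw, h⟩ => ⟨w, hw, h⟩⟩
    rw [hset]
    exact (MeasurableSet.const _).union <| MeasurableSet.biUnion
      (G.neighborSet v).toFinite.countable fun w _ => (hH w v).inter (ih w)

end SimpleGraph

namespace MeasureTheory

variable {Ω : Type*} {m m0 : MeasurableSpace Ω} {μ : Measure Ω}

theorem ae_condExp_indicator_le_of_inter_subset [IsFiniteMeasure μ] (hm : m ≤ m0) {A B T : Set Ω}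
    (hA : MeasurableSet A) (hB : MeasurableSet B) (hT : MeasurableSet[m] T) (hAB : T ∩ A ⊆ B) :
    ∀ᵐ ω ∂μ, ω ∈ T → μ[A.indicator (1 : Ω → ℝ) | m] ω ≤ μ[B.indicator 1 | m] ω := by
  have hle : T.indicator (A.indicator (1 : Ω → ℝ)) ≤ B.indicator 1 := by
    rw [Set.indicator_indicator]
    exact Set.indicator_le_indicator_of_subset hAB fun _ => zero_le_one
  have hint : ∀ {S : Set Ω}, MeasurableSet S → Integrable (S.indicator (1 : Ω → ℝ)) μ :=
    fun hS => (integrable_const 1).indicator hS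
  filter_upwards [condExp_indicator (m := m) (hint hA) hT,
    condExp_mono (m := m) ((hint hA).indicator (hm _ hT)) (hint hB) (Eventually.of_forall hle)]
    with ω hind hmono hω
  rwa [hind, Set.indicator_of_mem hω] at hmono

theorem ae_finite_setOf_le_condExp [IsFiniteMeasure μ] {ℱ : Filtration ℕ m0} {s : ℕ → Set Ω}
    (hs : ∀ n, MeasurableSet[ℱ n] (s n)) {δ : ℝ} (hδ : 0 < δ) :
    ∀ᵐ ω ∂μ, {n | ω ∈ s n}.Finite →
      {n | δ ≤ μ[(s (n + 1)).indicator (1 : Ω → ℝ) | ℱ n] ω}.Finite := by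
  have hnonneg : ∀ᵐ ω ∂μ, ∀ n, 0 ≤ μ[(s (n + 1)).indicator (1 : Ω → ℝ) | ℱ n] ω :=
    ae_all_iff.2 fun n => condExp_nonneg (Eventually.of_forall
      (Set.indicator_nonneg fun _ _ => zero_le_one))
  filter_upwards [ae_mem_limsup_atTop_iff μ hs, hnonneg] with ω hlevy hnonneg hfin
  have hsum : Summable fun n => μ[(s (n + 1)).indicator (1 : Ω → ℝ) | ℱ n] ω := by
    refine (summable_iff_not_tendsto_nat_atTop_of_nonneg hnonneg).2 fun htends => ?_
    have := Filter.mem_limsup_iff_frequently_mem.mp (hlevy.2 htends)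
    exact (Nat.frequently_atTop_iff_infinite.mp this) hfin
  have := hsum.tendsto_atTop_zero.eventually (gt_mem_nhds hδ)
  rw [← Nat.cofinite_eq_atTop, eventually_cofinite] at this
  simpa only [not_lt] using this

end MeasureTheory

namespace MonotoneWalk

variable {V : Type*}

namespace GrowingSRW

variable {Gbar : SimpleGraph V} {o : V} {Ω : Type*} {mΩ : MeasurableSpace Ω}
  {μ : Measure Ω} (W : GrowingSRW Gbar o mΩ μ)

def withinDist (r t : ℕ) : Set Ω :=
  {ω | (W.G t ω).spanningCoe.edist o (W.X t ω) ≤ r}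

theorem measurableSet_withinDist [Gbar.LocallyFinite] (r t : ℕ) :
    MeasurableSet[W.F t] (W.withinDist r t) := by
  have hset : W.withinDist r t = ⋃ x ∈ {x | Gbar.edist o x ≤ r},
      {ω | W.X t ω = x} ∩ {ω | (W.G t ω).spanningCoe.edist o x ≤ r} := by
    ext ω
    simp only [withinDist, Set.mem_ofPred_eq, Set.mem_iUnion, Set.mem_inter_iff, exists_prop]
    exact ⟨fun h => ⟨_, (SimpleGraph.edist_anti (W.G t ω).spanningCoe_le).trans h, rfl, h⟩,
      fun ⟨_, _, rfl, h⟩ => h⟩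
  rw [hset]
  exact MeasurableSet.biUnion (SimpleGraph.finite_setOf_edist_le o r).countable fun x _ =>
    (W.X_adapted t x).inter (SimpleGraph.measurableSet_setOf_edist_le (W.G_adj_adapted t) o r x)

theorem inv_ncard_le_condExp_withinDist [IsFiniteMeasure μ] [Gbar.LocallyFinite] (r k : ℕ)
    (x y : V) :
    ∀ᵐ ω ∂μ, W.X k ω = x → (W.G k ω).Adj x y → (W.G k ω).spanningCoe.edist o y ≤ r →
      (((W.G k ω).neighborSet x).ncard : ℝ)⁻¹ ≤
        μ[(W.withinDist r (k + 1)).indicator 1 | W.F k] ω := by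
  set T := {ω | W.X k ω = x} ∩ {ω | (W.G k ω).Adj x y} ∩
    {ω | (W.G k ω).spanningCoe.edist o y ≤ r}
  have hT : MeasurableSet[W.F k] T := ((W.X_adapted k x).inter (W.G_adj_adapted k x y)).inter
    (SimpleGraph.measurableSet_setOf_edist_le (W.G_adj_adapted k) o r y)
  have hTA : T ∩ {ω | W.X (k + 1) ω = y} ⊆ W.withinDist r (k + 1) := by
    rintro ω ⟨⟨⟨-, -⟩, hy⟩, hXy⟩
    simp only [withinDist, Set.mem_ofPred_eq] at hXy ⊢
    rw [hXy]
    exact (SimpleGraph.edist_anti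
      (SimpleGraph.Subgraph.spanningCoe_le_of_le (W.mono ω k))).trans hy
  have hstep : μ[{ω | W.X (k + 1) ω = y}.indicator (1 : Ω → ℝ) | W.F k] =ᵐ[μ] fun ω =>
      if (W.G k ω).Adj (W.X k ω) y then (((W.G k ω).neighborSet (W.X k ω)).ncard : ℝ)⁻¹
      else 0 :=
    W.step k y
  filter_upwards [hstep, ae_condExp_indicator_le_of_inter_subset (W.F.le k)
    (W.F.le _ _ (W.X_adapted (k + 1) y)) (W.F.le _ _ (W.measurableSet_withinDist r (k + 1))) hT
    hTA] with ω hstep hle hXx hxy hy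
  rw [hstep, hXx, if_pos hxy] at hle
  exact hle ⟨⟨hXx, hxy⟩, hy⟩

theorem exists_pos_le_condExp_withinDist [IsFiniteMeasure μ] [Gbar.LocallyFinite] (r : ℕ) :
    ∃ δ > (0 : ℝ), ∀ᵐ ω ∂μ, ∀ k, ω ∈ W.withinDist (r + 1) k → W.X k ω ≠ o →
      δ ≤ μ[(W.withinDist r (k + 1)).indicator 1 | W.F k] ω := by
  obtain ⟨D, hD⟩ := SimpleGraph.exists_ncard_neighborSet_le (G := Gbar) o (r + 1)
  -- `D + 1` rather than `D`: `(0 : ℝ)⁻¹ = 0`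
  refine ⟨((D : ℝ) + 1)⁻¹, by positivity, ?_⟩
  have hpairs : ∀ᵐ ω ∂μ, ∀ k, ∀ x ∈ {x | Gbar.edist o x ≤ (r + 1 : ℕ)},
      ∀ y ∈ {y | Gbar.edist o y ≤ r}, W.X k ω = x → (W.G k ω).Adj x y →
        (W.G k ω).spanningCoe.edist o y ≤ r → (((W.G k ω).neighborSet x).ncard : ℝ)⁻¹ ≤
          μ[(W.withinDist r (k + 1)).indicator 1 | W.F k] ω :=
    ae_all_iff.2 fun k => (eventually_all_finite (SimpleGraph.finite_setOf_edist_le o _)).2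
      fun x _ => (eventually_all_finite (SimpleGraph.finite_setOf_edist_le o _)).2
        fun y _ => W.inv_ncard_le_condExp_withinDist r k x y
  filter_upwards [hpairs] with ω hpairs k hk hne
  obtain ⟨y, hyx, hy⟩ := (SimpleGraph.edist_le_succ_iff.mp hk).resolve_left hne.symm
  have hGbar : ∀ {z n}, (W.G k ω).spanningCoe.edist o z ≤ n → Gbar.edist o z ≤ n :=
    fun h => (SimpleGraph.edist_anti (W.G k ω).spanningCoe_le).trans h
  have hdeg : ((W.G k ω).neighborSet (W.X k ω)).ncard ≤ D :=
    (Set.ncard_le_ncard ((W.G k ω).neighborSet_subset _) (Set.toFinite _)).trans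
      (hD _ (hGbar hk))
  have hpos : 0 < ((W.G k ω).neighborSet (W.X k ω)).ncard :=
    (Set.ncard_pos ((Set.toFinite _).subset ((W.G k ω).neighborSet_subset _))).2 ⟨y, hyx.symm⟩
  calc ((D : ℝ) + 1)⁻¹ ≤ (((W.G k ω).neighborSet (W.X k ω)).ncard : ℝ)⁻¹ := by
        gcongr
        exact_mod_cast hdeg.trans (Nat.le_succ D)
    _ ≤ _ := hpairs k _ (hGbar hk) y (hGbar hy) rfl hyx.symm hy

theorem ae_finite_withinDist [IsFiniteMeasure μ] [Gbar.LocallyFinite] (r : ℕ) :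
    ∀ᵐ ω ∂μ, {t | W.X t ω = o}.Finite → {t | ω ∈ W.withinDist r t}.Finite := by
  induction r with
  | zero =>
    refine ae_of_all _ fun ω hfin => hfin.subset fun t ht => ?_
    simp only [withinDist, Set.mem_ofPred_eq, Nat.cast_zero, nonpos_iff_eq_zero,
      SimpleGraph.edist_eq_zero_iff] at ht
    exact ht.symm
  | succ r ih =>
    obtain ⟨δ, hδ, hstep⟩ := W.exists_pos_le_condExp_withinDist r
    filter_upwards [ih, hstep,
      ae_finite_setOf_le_condExp (μ := μ) (W.measurableSet_withinDist r) hδ]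
      with ω ih hstep hlevy hfin
    refine (hfin.union (hlevy (ih hfin))).subset fun t ht => ?_
    by_cases hX : W.X t ω = o
    · exact Or.inl hX
    · exact Or.inr (hstep t ht hX)

end GrowingSRW

theorem srw_growing_dist_tendsto_atTop_of_transient_general
    {V : Type*} (Gbar : SimpleGraph V) (o : V)
    (hlf : Gbar.LocallyFinite)
    {Ω : Type*} (mΩ : MeasurableSpace Ω) (μ : Measure Ω) [IsProbabilityMeasure μ]
    (W : GrowingSRW Gbar o mΩ μ) :
    ∀ᵐ ω ∂μ, {t | W.X t ω = o}.Finite →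
      ∀ r : ℕ, ∀ᶠ t in atTop,
        (r : ℕ∞) < (W.G t ω).spanningCoe.edist o (W.X t ω) := by
  filter_upwards [ae_all_iff.2 W.ae_finite_withinDist] with ω hfinite htransient r
  rw [← Nat.cofinite_eq_atTop, eventually_cofinite]
  exact (hfinite r htransient).subset fun t ht => not_lt.mp ht

/-- For simple random walk on monotone increasing connected growing
graphs `G_t ⊆ Ḡ`, on the event of transience of `0` (i.e. `X_t = 0` finitely often),
almost surely the graph distance `d^{G_t}(0, X_t)` tends to infinity as `t → ∞`. -/
theorem srw_growing_dist_tendsto_atTop_of_transient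
    {V : Type*} (Gbar : SimpleGraph V) (o : V)
    (hlf : Gbar.LocallyFinite) (hconn : Gbar.Connected) (hinf : Infinite V)
    {Ω : Type*} (mΩ : MeasurableSpace Ω) (μ : Measure Ω) [IsProbabilityMeasure μ]
    (W : GrowingSRW Gbar o mΩ μ) :
    ∀ᵐ ω ∂μ, {t | W.X t ω = o}.Finite →
      ∀ r : ℕ, ∀ᶠ t in atTop,
        (r : ℕ∞) < (W.G t ω).spanningCoe.edist o (W.X t ω) :=
  srw_growing_dist_tendsto_atTop_of_transient_general Gbar o hlf mΩ μ W

end MonotoneWalk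
end

section
/- Let X_t be a simple random walk on a nondecreasing sequence of connected growing graphs G_t ⊆ Ḡ, with X_0 = 0 and B^Ḡ(0,1) ⊆ G_0. Then with probability one, the site 0 is transient for the sample path of the walk if and only if every vertex of Ḡ is transient for this sample path. -/
open MeasureTheory ProbabilityTheory Filter Set
open scoped ENNReal Classical Pointwise

/-
If `x` is visited infinitely often and `x ~ y` in some `G_t`, then `x ~ y` in all later `G_t`,
so infinitely often the walk sits at `x` with conditional probability at least `1 / deg_Ḡ x` of
stepping to `y` next; by Lévy's conditional Borel–Cantelli lemma it does so infinitely often.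
Hence, almost surely, the set of recurrent sites is closed under adjacency in every `G_t`. Since
each `G_t` is connected and contains `o`, any recurrent site forces `o` to be recurrent.
-/

variable {V : Type*}

namespace SimpleGraph

lemma Reachable.mem_of_adj_closed {G : SimpleGraph V} {S : Set V}
    (hS : ∀ ⦃x y⦄, G.Adj x y → x ∈ S → y ∈ S) {u v : V} (h : G.Reachable u v) (hu : u ∈ S) :
    v ∈ S := by
  obtain ⟨w⟩ := h
  induction w with
  | nil => exact hu
  | cons hadj _ ih => exact ih (hS hadj hu)

lemma Subgraph.Connected.mem_of_adj_closed {G : SimpleGraph V} {H : G.Subgraph}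
    (hH : H.Connected) {S : Set V} (hS : ∀ ⦃x y⦄, H.Adj x y → x ∈ S → y ∈ S) {u v : V}
    (hu : u ∈ H.verts) (hv : v ∈ H.verts) (huS : u ∈ S) : v ∈ S :=
  Reachable.mem_of_adj_closed (S := Subtype.val ⁻¹' S) (fun _ _ h => hS h)
    (hH ⟨u, hu⟩ ⟨v, hv⟩) huS

lemma Connected.countable_of_countable_neighborSet {G : SimpleGraph V}
    (hG : G.Connected) (hnbr : ∀ v, (G.neighborSet v).Countable) : Countable V := by
  obtain ⟨o⟩ := hG.nonempty
  have hlen : ∀ n, {x | ∃ w : G.Walk x o, w.length = n}.Countable := by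
    intro n
    induction n with
    | zero =>
      refine (Set.countable_singleton o).mono ?_
      rintro x ⟨w, hw⟩
      exact Walk.eq_of_length_eq_zero hw
    | succ n ih =>
      refine (ih.biUnion fun y _ => hnbr y).mono ?_
      rintro x ⟨w, hw⟩
      cases w with
      | nil => simp at hw
      | cons hxy p => exact Set.mem_biUnion ⟨p, by simpa using hw⟩ hxy.symm
  refine Set.countable_univ_iff.mp ((Set.countable_iUnion hlen).mono fun x _ => ?_)
  obtain ⟨w⟩ := hG.preconnected x o
  exact Set.mem_iUnion.2 ⟨w.length, w, rfl⟩

lemma Subgraph.inv_ncard_neighborSet_le {G : SimpleGraph V} (H : G.Subgraph)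
    {x y : V} (hfin : (G.neighborSet x).Finite) (hxy : H.Adj x y) :
    ((G.neighborSet x).ncard : ℝ)⁻¹ ≤ ((H.neighborSet x).ncard : ℝ)⁻¹ := by
  have hsub := H.neighborSet_subset x
  have hpos : 0 < (H.neighborSet x).ncard := (Set.ncard_pos (hfin.subset hsub)).2 ⟨y, hxy⟩
  exact inv_anti₀ (by exact_mod_cast hpos) (by exact_mod_cast Set.ncard_le_ncard hsub hfin)

end SimpleGraph

lemma tendsto_sum_range_atTop_of_frequently_le {f : ℕ → ℝ} {c : ℝ} (hf : ∀ n, 0 ≤ f n)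
    (hc : 0 < c) (hfreq : ∃ᶠ n in atTop, c ≤ f n) :
    Tendsto (fun n => ∑ k ∈ Finset.range n, f k) atTop atTop := by
  refine (not_summable_iff_tendsto_nat_atTop_of_nonneg hf).1 fun hsum => ?_
  have hsmall : ∀ᶠ n in atTop, f n < c := hsum.tendsto_atTop_zero.eventually (gt_mem_nhds hc)
  exact (hfreq.and_eventually hsmall).exists.elim fun n hn => (hn.1.trans_lt hn.2).false

lemma ae_frequently_of_frequently_condExp_ge {Ω : Type*} {m₀ : MeasurableSpace Ω}
    {μ : Measure Ω} [IsFiniteMeasure μ] (ℱ : Filtration ℕ m₀) {A B : ℕ → Set Ω}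
    (hA : ∀ t, MeasurableSet[ℱ (t + 1)] (A t)) {c : ℝ} (hc : 0 < c)
    (hAB : ∀ t, ∀ᵐ ω ∂μ, ω ∈ B t → c ≤ μ[(A t).indicator (1 : Ω → ℝ) | ℱ t] ω) :
    ∀ᵐ ω ∂μ, (∃ᶠ t in atTop, ω ∈ B t) → ∃ᶠ t in atTop, ω ∈ A t := by
  let s : ℕ → Set Ω := fun n => Nat.casesOn n ∅ A
  have hs : ∀ n, MeasurableSet[ℱ n] (s n) := fun n => by
    cases n with
    | zero => exact @MeasurableSet.empty Ω (ℱ 0)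
    | succ t => exact hA t
  have hcond : ∀ᵐ ω ∂μ, ∀ t, 0 ≤ μ[(A t).indicator (1 : Ω → ℝ) | ℱ t] ω := ae_all_iff.2 fun t =>
    condExp_nonneg (Eventually.of_forall (Set.indicator_nonneg fun _ _ => zero_le_one))
  filter_upwards [ae_mem_limsup_atTop_iff μ hs, ae_all_iff.2 hAB, hcond]
    with ω hlimsup hge hnonneg hB
  have hA_limsup : ω ∈ limsup s atTop :=
    hlimsup.2 (tendsto_sum_range_atTop_of_frequently_le hnonneg hc (hB.mono hge))
  rw [← limsup_nat_add s 1] at hA_limsup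
  exact mem_limsup_iff_frequently_mem.1 hA_limsup

namespace MonotoneWalk

namespace GrowingSRW

variable {Gbar : SimpleGraph V} {o : V} {Ω : Type*} {mΩ : MeasurableSpace Ω} {μ : Measure Ω}

lemma G_monotone (W : GrowingSRW Gbar o mΩ μ) (ω : Ω) : Monotone fun t => W.G t ω :=
  monotone_nat_of_le_succ (W.mono ω)

lemma origin_mem_verts (W : GrowingSRW Gbar o mΩ μ) (ω : Ω) (t : ℕ) : o ∈ (W.G t ω).verts :=
  (W.G_monotone ω t.zero_le).1 (by simpa only [W.X_zero ω] using W.X_mem ω 0)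

lemma inv_degree_le_condExp_step [IsFiniteMeasure μ] (W : GrowingSRW Gbar o mΩ μ) {x : V}
    (hfin : (Gbar.neighborSet x).Finite) (y : V) (t : ℕ) :
    ∀ᵐ ω ∂μ, ω ∈ {ω | W.X t ω = x ∧ (W.G t ω).Adj x y} →
      ((Gbar.neighborSet x).ncard : ℝ)⁻¹ ≤
        μ[{ω | (W.X t ω = x ∧ (W.G t ω).Adj x y) ∧ W.X (t + 1) ω = y}.indicator 1 | W.F t] ω := by
  set B := {ω | W.X t ω = x ∧ (W.G t ω).Adj x y}
  set f : Ω → ℝ := fun ω => if W.X (t + 1) ω = y then 1 else 0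
  have hB : MeasurableSet[W.F t] B := (W.X_adapted t x).inter (W.G_adj_adapted t x y)
  have hf : Integrable f μ :=
    (integrable_const 1).indicator (W.F.le (t + 1) _ (W.X_adapted (t + 1) y))
  have hind : {ω | (W.X t ω = x ∧ (W.G t ω).Adj x y) ∧ W.X (t + 1) ω = y}.indicator 1
      = B.indicator f := by
    ext ω
    by_cases h : W.X (t + 1) ω = y <;> simp [B, f, Set.indicator_apply, h]
  filter_upwards [condExp_indicator hf hB, W.step t y] with ω hcond hstep hω
  rw [hind, hcond, Set.indicator_of_mem hω, hstep, hω.1, if_pos hω.2]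
  exact (W.G t ω).inv_ncard_neighborSet_le hfin hω.2

lemma ae_frequently_visit_of_adj [IsFiniteMeasure μ] (W : GrowingSRW Gbar o mΩ μ) {x : V}
    (hfin : (Gbar.neighborSet x).Finite) (y : V) :
    ∀ᵐ ω ∂μ, (∃ᶠ t in atTop, W.X t ω = x) → (∃ t, (W.G t ω).Adj x y) →
      ∃ᶠ t in atTop, W.X t ω = y := by
  by_cases hxy : Gbar.Adj x y
  swap
  · exact Eventually.of_forall fun ω _ ⟨t, h⟩ => absurd ((W.G t ω).adj_sub h) hxy
  have hc : 0 < ((Gbar.neighborSet x).ncard : ℝ)⁻¹ :=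
    inv_pos.2 (by exact_mod_cast (Set.ncard_pos hfin).2 ⟨y, hxy⟩)
  filter_upwards [ae_frequently_of_frequently_condExp_ge W.F
    (fun t => (W.F.mono t.le_succ _ ((W.X_adapted t x).inter (W.G_adj_adapted t x y))).inter
      (W.X_adapted (t + 1) y)) hc (W.inv_degree_le_condExp_step hfin y)] with ω hBC hx ⟨t₀, ht₀⟩
  have hB : ∃ᶠ t in atTop, W.X t ω = x ∧ (W.G t ω).Adj x y :=
    hx.and_eventually ((eventually_ge_atTop t₀).mono fun t ht => (W.G_monotone ω ht).2 ht₀)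
  exact (tendsto_add_atTop_nat 1).frequently ((hBC hB).mono fun _ h => h.2)

end GrowingSRW

theorem srw_growing_transient_iff_all_transient_general
    {V : Type*} (Gbar : SimpleGraph V) (o : V)
    (hlf : Gbar.LocallyFinite) (hconn : Gbar.Connected)
    {Ω : Type*} (mΩ : MeasurableSpace Ω) (μ : Measure Ω) [IsProbabilityMeasure μ]
    (W : GrowingSRW Gbar o mΩ μ) :
    ∀ᵐ ω ∂μ, ({t | W.X t ω = o}.Finite ↔ ∀ x : V, {t | W.X t ω = x}.Finite) := by
  have hfin : ∀ x, (Gbar.neighborSet x).Finite := fun x =>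
    have := hlf x; (Gbar.neighborSet x).toFinite
  have : Countable V := hconn.countable_of_countable_neighborSet fun x => (hfin x).countable
  filter_upwards [ae_all_iff.2 fun x => ae_all_iff.2 (W.ae_frequently_visit_of_adj (hfin x))]
    with ω hclosed
  simp only [← Set.not_infinite, ← Nat.frequently_atTop_iff_infinite]
  refine ⟨fun ho x hx => ?_, fun h => h o⟩
  obtain ⟨t, hxt⟩ := hx.exists
  exact ho <| (W.conn ω t).mem_of_adj_closed (S := {z | ∃ᶠ s in atTop, W.X s ω = z})
    (fun a b hab ha => hclosed a b ha ⟨t, hab⟩) (hxt ▸ W.X_mem ω t) (W.origin_mem_verts ω t) hx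

/-- For simple random walk on monotone increasing connected growing
graphs `G_t ⊆ Ḡ`, with probability one the site `0` is transient for the sample path
if and only if every vertex of `Ḡ` is transient for this sample path. -/
theorem srw_growing_transient_iff_all_transient
    {V : Type*} (Gbar : SimpleGraph V) (o : V)
    (hlf : Gbar.LocallyFinite) (hconn : Gbar.Connected) (hinf : Infinite V)
    {Ω : Type*} (mΩ : MeasurableSpace Ω) (μ : Measure Ω) [IsProbabilityMeasure μ]
    (W : GrowingSRW Gbar o mΩ μ) :
    ∀ᵐ ω ∂μ, ({t | W.X t ω = o}.Finite ↔ ∀ x : V, {t | W.X t ω = x}.Finite) :=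
  srw_growing_transient_iff_all_transient_general Gbar o hlf hconn mΩ μ W

end MonotoneWalk
end

section
/- Let X_t be a simple random walk on growing graphs G_t ⊆ Ḡ, and let S = Σ_n p_n where p_n = P(A_n | F_{η_n}) with A_n = {∃ s ∈ [η_n, σ_n): X_s = 0}, σ_n = inf{t ≥ η_n : X_t ∈ ∂G_{η_n}} and η_{n+1} = inf{t ≥ σ_n : X_t ∉ ∂G_t}, η_0 = 0. If the simple random walk on the fixed graph Ḡ is transient, then almost surely on the event {S < ∞}, the sample path of X_t is transient at 0. -/
open MeasureTheory ProbabilityTheory Filter Set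
open scoped ENNReal Classical Pointwise

namespace MonotoneWalk

variable {V : Type*}

/-!
By Lévy's extension of the Borel–Cantelli lemma, applied to the filtration `F_{η_{n+1}}`
(for which `A_n` is measurable), on `{S < ∞}` only finitely many of the events `A_n` occur.
Every visit to `0` happens off the boundary, hence inside some `[η_n, σ_n)`, on the event `A_n`.
So if `0` is visited infinitely often, some `σ_n` is infinite while `η_n` is finite: from time
`η_n` on the walk never touches the boundary of the current graph and moves as simple random walk
on `Ḡ`. Then the chance of following a given closed walk from a visit to `0` is at most the weight
of that walk, so the expected number of later returns is bounded by the Green function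
`∑ walkWeight ≤ (1 - returnProb)⁻¹ < ∞`, and by Borel–Cantelli there are finitely many.
-/

open SimpleGraph

section Walks

variable {G : SimpleGraph V}

instance [Countable V] {u v : V} : Countable (G.Walk u v) :=
  Walk.support_injective.countable

lemma finite_setOf_exists_walk_length_eq [G.LocallyFinite] (o : V) (n : ℕ) :
    {v | ∃ w : G.Walk v o, w.length = n}.Finite := by
  induction n with
  | zero =>
    refine (Set.finite_singleton o).subset ?_
    rintro v ⟨w, hw⟩
    cases w with
    | nil => rfl
    | cons => simp at hw
  | succ n ih =>
    refine (ih.biUnion fun y _ => (G.neighborSet y).toFinite).subset ?_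
    rintro v ⟨w, hw⟩
    cases w with
    | nil => simp at hw
    | cons h p => exact Set.mem_biUnion ⟨p, by simpa using hw⟩ h.symm

lemma countable_of_locallyFinite_of_connected [G.LocallyFinite] (hconn : G.Connected) :
    Countable V := by
  obtain ⟨o⟩ := hconn.nonempty
  have hcover : ⋃ n, {v | ∃ w : G.Walk v o, w.length = n} = Set.univ :=
    Set.eq_univ_of_forall fun v =>
      Set.mem_iUnion.2 ⟨_, (hconn.preconnected v o).some, rfl⟩
  rw [← Set.countable_univ_iff, ← hcover]
  exact Set.countable_iUnion fun n => (finite_setOf_exists_walk_length_eq o n).countable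

lemma walkWeight_nil {u : V} : walkWeight G (Walk.nil : G.Walk u u) = 1 := by
  simp [walkWeight]

lemma walkWeight_cons {u v w : V} (h : G.Adj u v) (p : G.Walk v w) :
    walkWeight G (p.cons h) = ((G.neighborSet u).ncard : ℝ≥0∞)⁻¹ * walkWeight G p := by
  simp [walkWeight, List.dropLast_cons_of_ne_nil p.support_ne_nil]

lemma walkWeight_append {u v w : V} (p : G.Walk u v) (q : G.Walk v w) :
    walkWeight G (p.append q) = walkWeight G p * walkWeight G q := by
  induction p with
  | nil => simp [walkWeight_nil]
  | cons h p ih => rw [Walk.cons_append, walkWeight_cons, walkWeight_cons, ih, mul_assoc]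

lemma walkWeight_concat {u v w : V} (p : G.Walk u v) (h : G.Adj v w) :
    walkWeight G (p.concat h) = walkWeight G p * ((G.neighborSet v).ncard : ℝ≥0∞)⁻¹ := by
  rw [Walk.concat_eq_append, walkWeight_append, walkWeight_cons, walkWeight_nil,
    mul_one]

lemma exists_walk_getVert_eq (f : ℕ → V) (k : ℕ) (hf : ∀ i < k, G.Adj (f i) (f (i + 1))) :
    ∃ w : G.Walk (f 0) (f k), w.length = k ∧ ∀ i ≤ k, w.getVert i = f i := by
  induction k generalizing f with
  | zero => exact ⟨.nil, rfl, by simp⟩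
  | succ k ih =>
    obtain ⟨w, hlen, hw⟩ := ih (fun i => f (i + 1)) fun i hi => hf (i + 1) (by omega)
    refine ⟨.cons (hf 0 (by omega)) w, by simp [hlen], fun i hi => ?_⟩
    cases i with
    | zero => simp
    | succ i => simpa using hw i (by omega)

lemma exists_firstReturn_append {o : V} (w : G.Walk o o) (hw : w.length ≠ 0) :
    ∃ e r : G.Walk o o, e.append r = w ∧
      (e.length ≠ 0 ∧ ∀ x ∈ e.support.tail.dropLast, x ≠ o) ∧ r.length < w.length := by
  cases w with
  | nil => simp at hw
  | cons h q =>
    have hmem : o ∈ q.support := q.end_mem_support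
    refine ⟨.cons h (q.takeUntil o hmem), q.dropUntil o hmem, by simp [q.take_spec hmem],
      ⟨by simp, ?_⟩, ?_⟩
    · have := Walk.dropLast_support_concat _ ▸ q.count_support_takeUntil_eq_one hmem
      simp only [Walk.support_cons, List.tail_cons]
      grind [List.not_mem_of_count_eq_zero]
    · have := congrArg Walk.length (q.take_spec hmem)
      simp only [Walk.length_append] at this
      simp only [Walk.length_cons]
      omega

end Walks

section Green

variable {G : SimpleGraph V} {o : V}

lemma tsum_walkWeight_length_lt_succ_le (L : ℕ) :
    ∑' w : {w : G.Walk o o // w.length < L + 1}, walkWeight G w.1 ≤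
      1 + returnProb G o * ∑' w : {w : G.Walk o o // w.length < L}, walkWeight G w.1 := by
  let Ψ : Unit ⊕
      ({e : G.Walk o o // e.length ≠ 0 ∧ ∀ x ∈ e.support.tail.dropLast, x ≠ o} ×
        {r : G.Walk o o // r.length < L}) → G.Walk o o :=
    Sum.elim (fun _ => .nil) fun p => p.1.1.append p.2.1
  have hΨ : ∀ w : {w : G.Walk o o // w.length < L + 1}, ∃ x, Ψ x = w.1 := by
    rintro ⟨w, hw⟩
    by_cases h0 : w.length = 0
    · exact ⟨.inl (), (Walk.eq_nil_iff_nil.2 (Walk.length_eq_zero_iff.1 h0)).symm⟩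
    · obtain ⟨e, r, rfl, he, hr⟩ := exists_firstReturn_append w h0
      exact ⟨.inr (⟨e, he⟩, ⟨r, by omega⟩), rfl⟩
  choose Φ hΦ using hΨ
  have hΦinj : Function.Injective Φ := fun a b hab =>
    Subtype.ext (by rw [← hΦ a, ← hΦ b, hab])
  calc ∑' w : {w : G.Walk o o // w.length < L + 1}, walkWeight G w.1
      = ∑' w, walkWeight G (Ψ (Φ w)) := by simp only [hΦ]
    _ ≤ ∑' x, walkWeight G (Ψ x) := ENNReal.tsum_comp_le_tsum_of_injective hΦinj _
    _ = _ := by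
      rw [ENNReal.summable.tsum_sum ENNReal.summable]
      simp only [Ψ, Sum.elim_inl, Sum.elim_inr, walkWeight_nil, walkWeight_append, tsum_fintype,
        Finset.univ_unique, Finset.sum_singleton, returnProb]
      rw [ENNReal.tsum_prod', ← ENNReal.tsum_mul_right]
      simp_rw [ENNReal.tsum_mul_left]

theorem tsum_walkWeight_le_inv_one_sub_returnProb (hr : returnProb G o < 1) :
    ∑' w : G.Walk o o, walkWeight G w ≤ (1 - returnProb G o)⁻¹ := by
  set C := (1 - returnProb G o)⁻¹
  have hC : 1 + returnProb G o * C = C := by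
    have h1 : 1 - returnProb G o ≠ 0 := (tsub_pos_of_lt hr).ne'
    have h2 : 1 - returnProb G o ≠ ⊤ := ENNReal.sub_ne_top ENNReal.one_ne_top
    calc 1 + returnProb G o * C = ((1 - returnProb G o) + returnProb G o) * C := by
          rw [add_mul, ENNReal.mul_inv_cancel h1 h2]
      _ = C := by rw [tsub_add_cancel_of_le hr.le, one_mul]
  have htrunc : ∀ L, ∑' w : {w : G.Walk o o // w.length < L}, walkWeight G w.1 ≤ C := by
    intro L
    induction L with
    | zero =>
      have : IsEmpty {w : G.Walk o o // w.length < 0} := ⟨fun w => Nat.not_lt_zero _ w.2⟩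
      simp
    | succ L ih =>
      calc _ ≤ 1 + returnProb G o * ∑' w : {w : G.Walk o o // w.length < L}, walkWeight G w.1 :=
            tsum_walkWeight_length_lt_succ_le L
        _ ≤ 1 + returnProb G o * C := by gcongr
        _ = C := hC
  rw [ENNReal.tsum_eq_iSup_sum]
  refine iSup_le fun s => ?_
  obtain ⟨L, hL⟩ : ∃ L, ∀ w ∈ s, w.length < L :=
    ⟨s.sup Walk.length + 1, fun w hw => Nat.lt_succ_of_le (Finset.le_sup hw)⟩
  calc ∑ w ∈ s, walkWeight G w = ∑ w ∈ s, {w | w.length < L}.indicator (walkWeight G) w :=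
        Finset.sum_congr rfl fun w hw =>
          (Set.indicator_of_mem (s := {w : G.Walk o o | w.length < L}) (hL w hw) _).symm
    _ ≤ ∑' w, {w | w.length < L}.indicator (walkWeight G) w := ENNReal.sum_le_tsum s
    _ = ∑' w : {w : G.Walk o o // w.length < L}, walkWeight G w.1 := (tsum_subtype _ _).symm
    _ ≤ C := htrunc L

end Green

section Boundary

variable {Gbar : SimpleGraph V} [Gbar.LocallyFinite] {H K : Gbar.Subgraph} {v : V}

lemma mem_boundary_iff :
    v ∈ Boundary Gbar H ↔ v ∈ H.verts ∧ ∃ y, Gbar.Adj v y ∧ ¬ H.Adj v y := by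
  have hsub : H.neighborSet v ⊆ Gbar.neighborSet v := fun y hy => H.adj_sub hy
  refine and_congr_right fun _ => ⟨fun hlt => ?_, fun ⟨y, hy, hny⟩ =>
    Set.ncard_lt_ncard ⟨hsub, fun h => hny (h hy)⟩ (Set.toFinite _)⟩
  by_contra! h
  exact hlt.ne (congrArg Set.ncard (hsub.antisymm h))

lemma adj_of_notMem_boundary (hv : v ∈ H.verts) (hb : v ∉ Boundary Gbar H) {y : V}
    (hy : Gbar.Adj v y) : H.Adj v y := by
  by_contra hny
  exact hb (mem_boundary_iff.2 ⟨hv, y, hy, hny⟩)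

lemma notMem_boundary_of_le (hHK : H ≤ K) (hv : v ∈ H.verts) (hb : v ∉ Boundary Gbar H) :
    v ∉ Boundary Gbar K := by
  rw [mem_boundary_iff]
  rintro ⟨-, y, hy, hny⟩
  exact hny (hHK.2 (adj_of_notMem_boundary hv hb hy))

end Boundary

section MeasureInter

variable {Ω : Type*} {m m₀ : MeasurableSpace Ω} {μ : Measure Ω} [IsFiniteMeasure μ]

lemma measure_inter_le_of_condExp_indicator_le (hm : m ≤ m₀) {A B : Set Ω}
    (hA : MeasurableSet[m] A) (hB : MeasurableSet[m₀] B) {c : ℝ} (hc : 0 ≤ c)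
    (hle : ∀ᵐ ω ∂μ, ω ∈ A → μ[B.indicator 1 | m] ω ≤ c) :
    μ (A ∩ B) ≤ ENNReal.ofReal c * μ A := by
  have key : μ.real (A ∩ B) ≤ c * μ.real A :=
    calc μ.real (A ∩ B) = ∫ ω in A, B.indicator 1 ω ∂μ := by
          rw [integral_indicator_one hB, measureReal_restrict_apply hB, Set.inter_comm]
      _ = ∫ ω in A, μ[B.indicator 1 | m] ω ∂μ :=
          (setIntegral_condExp hm ((integrable_const 1).indicator hB) hA).symm
      _ ≤ ∫ _ in A, c ∂μ :=
          setIntegral_mono_ae_restrict integrable_condExp.integrableOn (integrableOn_const)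
            ((ae_restrict_iff' (hm A hA)).2 hle)
      _ = c * μ.real A := by rw [setIntegral_const, smul_eq_mul, mul_comm]
  rw [← ENNReal.ofReal_toReal (measure_ne_top μ (A ∩ B)),
    ← ENNReal.ofReal_toReal (measure_ne_top μ A), ← ENNReal.ofReal_mul hc]
  exact ENNReal.ofReal_le_ofReal key

end MeasureInter

section FirstTimes

lemma sInf_image_natCast {S : Set ℕ} (hS : S.Nonempty) :
    sInf (((↑) : ℕ → ℕ∞) '' S) = ↑(sInf S) := by
  rw [ENat.natCast_sInf hS, sInf_image]

lemma sInf_image_natCast_le_iff {S : Set ℕ} {m : ℕ} :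
    sInf (((↑) : ℕ → ℕ∞) '' S) ≤ m ↔ ∃ s ∈ S, s ≤ m := by
  refine ⟨fun h => ?_, fun ⟨s, hs, hsm⟩ =>
    (sInf_le (Set.mem_image_of_mem _ hs)).trans (Nat.cast_le.2 hsm)⟩
  rcases S.eq_empty_or_nonempty with rfl | hS
  · simp at h
  · rw [sInf_image_natCast hS, Nat.cast_le] at h
    exact ⟨_, Nat.sInf_mem hS, h⟩

lemma mem_of_sInf_image_natCast_eq {S : Set ℕ} {j : ℕ}
    (h : sInf (((↑) : ℕ → ℕ∞) '' S) = j) : j ∈ S := by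
  rcases S.eq_empty_or_nonempty with rfl | hS
  · simp at h
  · rw [sInf_image_natCast hS, Nat.cast_inj] at h
    exact h ▸ Nat.sInf_mem hS

variable {Ω : Type*} {mΩ : MeasurableSpace Ω} {F : Filtration ℕ mΩ}

/-- `P j s` is the event sought at time `s` by a search started at time `τ = j`. -/
lemma isStoppingTime_sInf_image {τ : Ω → ℕ∞} (hτ : IsStoppingTime F τ) {P : ℕ → ℕ → Ω → Prop}
    (hP : ∀ j s, j ≤ s → MeasurableSet[F s] {ω | P j s ω}) :
    IsStoppingTime F fun ω =>
      sInf (((↑) : ℕ → ℕ∞) '' {s | τ ω ≤ s ∧ P (τ ω).toNat s ω}) := by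
  intro m
  change MeasurableSet[F m] {ω | sInf (((↑) : ℕ → ℕ∞) ''
    {s | τ ω ≤ s ∧ P (τ ω).toNat s ω}) ≤ (m : ℕ∞)}
  have : {ω | sInf (((↑) : ℕ → ℕ∞) '' {s | τ ω ≤ s ∧ P (τ ω).toNat s ω}) ≤ (m : ℕ∞)} =
      ⋃ j ≤ m, ⋃ s ∈ Set.Icc j m, {ω | τ ω = j} ∩ {ω | P j s ω} := by
    ext ω
    simp only [Set.mem_ofPred_eq, sInf_image_natCast_le_iff, Set.mem_iUnion, Set.mem_inter_iff,
      Set.mem_Icc, exists_prop]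
    constructor
    · rintro ⟨s, ⟨hτs, hPs⟩, hsm⟩
      lift τ ω to ℕ using ne_top_of_le_ne_top (ENat.natCast_ne_top s) hτs with j hj
      rw [ENat.toNat_natCast] at hPs
      exact ⟨j, (Nat.cast_le.1 hτs).trans hsm, s, ⟨Nat.cast_le.1 hτs, hsm⟩, rfl, hPs⟩
    · rintro ⟨j, -, s, ⟨hjs, hsm⟩, hτj, hPs⟩
      exact ⟨s, ⟨hτj ▸ Nat.cast_le.2 hjs, by rwa [hτj, ENat.toNat_natCast]⟩, hsm⟩
  rw [this]
  exact .biUnion (Set.to_countable _) fun j hj => .biUnion (Set.to_countable _) fun s hs =>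
    (F.mono hj _ (hτ.measurableSet_eq_of_countable j)).inter (F.mono hs.2 _ (hP j s hs.1))

end FirstTimes

section StoppedSigma

variable {Ω : Type*} {mΩ : MeasurableSpace Ω} {F : Filtration ℕ mΩ}

lemma stoppedSigma_le (τ : Ω → ℕ∞) : stoppedSigma F τ ≤ mΩ :=
  MeasurableSpace.generateFrom_le fun _ hs => hs.1

lemma stoppedSigma_mono {τ τ' : Ω → ℕ∞} (hτ' : IsStoppingTime F τ') (hle : τ ≤ τ') :
    stoppedSigma F τ ≤ stoppedSigma F τ' := by
  refine MeasurableSpace.generateFrom_le fun s ⟨hs, hsτ⟩ =>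
    MeasurableSpace.measurableSet_generateFrom ⟨hs, fun m => ?_⟩
  have : s ∩ {ω | τ' ω ≤ m} = s ∩ {ω | τ ω ≤ m} ∩ {ω | τ' ω ≤ m} := by
    ext ω
    simp only [Set.mem_inter_iff, Set.mem_ofPred_eq]
    exact ⟨fun h => ⟨⟨h.1, (hle ω).trans h.2⟩, h.2⟩, fun h => ⟨h.1.1, h.2⟩⟩
  rw [this]
  exact (hsτ m).inter (hτ' m)

def stoppedFiltration (F : Filtration ℕ mΩ) (τ : ℕ → Ω → ℕ∞)
    (hτ : ∀ n, IsStoppingTime F (τ n)) (hmono : Monotone τ) : Filtration ℕ mΩ where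
  seq n := stoppedSigma F (τ n)
  mono' _ _ hnm := stoppedSigma_mono (hτ _) (hmono hnm)
  le' n := stoppedSigma_le (τ n)

end StoppedSigma

namespace GrowingSRW

variable {Gbar : SimpleGraph V} {o : V} {Ω : Type*} {mΩ : MeasurableSpace Ω} {μ : Measure Ω}
  (W : GrowingSRW Gbar o mΩ μ)

lemma monotone_G (ω : Ω) : Monotone fun t => W.G t ω :=
  monotone_nat_of_le_succ (W.mono ω)

lemma start_notMem_boundary (ω : Ω) (t : ℕ) : o ∉ Boundary Gbar (W.G t ω) := by
  rintro ⟨-, hlt⟩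
  refine hlt.ne (congrArg Set.ncard (Set.Subset.antisymm (fun y hy => (W.G t ω).adj_sub hy)
    fun y hy => ?_))
  exact (W.monotone_G ω (Nat.zero_le t)).2 (W.ball_sub ω y hy)

lemma eta_zero (ω : Ω) : W.eta 0 ω = 0 := rfl

lemma sigma_eq_sigmaOf (n : ℕ) (ω : Ω) : W.sigma n ω = W.sigmaOf ω (W.eta n ω) := by
  cases n <;> rfl

lemma eta_le_sigma (n : ℕ) (ω : Ω) : W.eta n ω ≤ W.sigma n ω := by
  rw [sigma_eq_sigmaOf]
  exact le_sInf (Set.forall_mem_image.2 fun _ hs => hs.1)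

lemma sigma_le_eta_succ (n : ℕ) (ω : Ω) : W.sigma n ω ≤ W.eta (n + 1) ω :=
  le_sInf (Set.forall_mem_image.2 fun _ hs => hs.1)

lemma monotone_eta : Monotone W.eta :=
  monotone_nat_of_le_succ fun n ω => (W.eta_le_sigma n ω).trans (W.sigma_le_eta_succ n ω)

lemma p_nonneg (n : ℕ) : 0 ≤ᵐ[μ] W.p n :=
  condExp_nonneg (.of_forall fun _ => Set.indicator_nonneg (fun _ _ => zero_le_one) _)

lemma measure_inter_X_succ_eq_le [IsFiniteMeasure μ] {t : ℕ} {v : V} {A : Set Ω}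
    (hA : MeasurableSet[W.F t] A) {c : ℝ} (hc : 0 ≤ c)
    (hbound : ∀ ω ∈ A, (W.G t ω).Adj (W.X t ω) v →
      (((W.G t ω).neighborSet (W.X t ω)).ncard : ℝ)⁻¹ ≤ c) :
    μ (A ∩ {ω | W.X (t + 1) ω = v}) ≤ ENNReal.ofReal c * μ A := by
  refine measure_inter_le_of_condExp_indicator_le (W.F.le t) hA
    (W.F.le (t + 1) _ (W.X_adapted (t + 1) v)) hc ?_
  have hind : {ω | W.X (t + 1) ω = v}.indicator 1 =
      fun ω => if W.X (t + 1) ω = v then (1 : ℝ) else 0 := by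
    ext ω
    simp [Set.indicator_apply]
  filter_upwards [W.step t v] with ω hω hωA
  rw [hind, hω]
  split_ifs with hadj
  · exact hbound ω hωA hadj
  · exact hc

def cylinder (t₀ : ℕ) {u v : V} (w : Gbar.Walk u v) : Set Ω :=
  {ω | (∀ i ≤ w.length, W.X (t₀ + i) ω = w.getVert i) ∧
    ∀ i < w.length, W.X (t₀ + i) ω ∉ Boundary Gbar (W.G (t₀ + i) ω)}

section Countable

variable [Countable V]

lemma measurableSet_setOf_X {s m : ℕ} (hs : s ≤ m) {P : V → Ω → Prop}
    (hP : ∀ v, MeasurableSet[W.F m] {ω | P v ω}) :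
    MeasurableSet[W.F m] {ω | P (W.X s ω) ω} := by
  have : {ω | P (W.X s ω) ω} = ⋃ v, {ω | W.X s ω = v} ∩ {ω | P v ω} := by
    ext ω
    simp
  rw [this]
  exact .iUnion fun v => (W.F.mono hs _ (W.X_adapted s v)).inter (hP v)

lemma ae_adj_X_succ [IsFiniteMeasure μ] :
    ∀ᵐ ω ∂μ, ∀ t, (W.G t ω).Adj (W.X t ω) (W.X (t + 1) ω) := by
  refine ae_all_iff.2 fun t => measure_mono_null (t := ⋃ v,
    {ω | ¬ (W.G t ω).Adj (W.X t ω) v} ∩ {ω | W.X (t + 1) ω = v})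
    (fun ω hω => Set.mem_iUnion.2 ⟨_, hω, rfl⟩) (measure_iUnion_null fun v => ?_)
  have hA : MeasurableSet[W.F t] {ω | ¬ (W.G t ω).Adj (W.X t ω) v} :=
    (W.measurableSet_setOf_X le_rfl fun u => W.G_adj_adapted t u v).compl
  simpa using W.measure_inter_X_succ_eq_le hA le_rfl fun ω hω hadj => absurd hadj hω

section LocallyFinite

variable [Gbar.LocallyFinite]

lemma measurableSet_mem_boundary (t : ℕ) (v : V) :
    MeasurableSet[W.F t] {ω | v ∈ Boundary Gbar (W.G t ω)} := by
  simp only [mem_boundary_iff, Set.ofPred_and, Set.ofPred_exists]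
  exact (W.G_verts_adapted t v).inter (.iUnion fun y =>
    (MeasurableSet.const _).inter (W.G_adj_adapted t v y).compl)

lemma measurableSet_X_mem_boundary {j s m : ℕ} (hj : j ≤ m) (hs : s ≤ m) :
    MeasurableSet[W.F m] {ω | W.X s ω ∈ Boundary Gbar (W.G j ω)} :=
  W.measurableSet_setOf_X hs fun v => W.F.mono hj _ (W.measurableSet_mem_boundary j v)

lemma isStoppingTime_sigma_of_eta {n : ℕ} (hη : IsStoppingTime W.F (W.eta n)) :
    IsStoppingTime W.F (W.sigma n) := by
  have : W.sigma n = fun ω => W.sigmaOf ω (W.eta n ω) := funext (W.sigma_eq_sigmaOf n)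
  rw [this]
  exact isStoppingTime_sInf_image hη fun j s hjs => W.measurableSet_X_mem_boundary hjs le_rfl

lemma isStoppingTime_eta (n : ℕ) : IsStoppingTime W.F (W.eta n) := by
  induction n with
  | zero => exact isStoppingTime_const W.F 0
  | succ n ih =>
    exact isStoppingTime_sInf_image (W.isStoppingTime_sigma_of_eta ih)
      (P := fun _ s ω => W.X s ω ∉ Boundary Gbar (W.G s ω))
      fun _ s _ => (W.measurableSet_X_mem_boundary le_rfl le_rfl).compl

lemma isStoppingTime_sigma (n : ℕ) : IsStoppingTime W.F (W.sigma n) :=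
  W.isStoppingTime_sigma_of_eta (W.isStoppingTime_eta n)

lemma measurableSet_eventA (n : ℕ) :
    MeasurableSet[stoppedSigma W.F (W.eta (n + 1))] (W.eventA n) := by
  set E : ℕ → Set Ω := fun s =>
    {ω | W.eta n ω ≤ s ∧ (s : ℕ∞) < W.sigma n ω ∧ W.X s ω = o}
  have hE : ∀ s, MeasurableSet[W.F s] (E s) := fun s =>
    (W.isStoppingTime_eta n s).inter
      (((W.isStoppingTime_sigma n).measurableSet_gt s).inter (W.X_adapted s o))
  have hA : W.eventA n = ⋃ s, E s := by
    ext ω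
    simp [eventA, E]
  refine MeasurableSpace.measurableSet_generateFrom
    ⟨hA ▸ .iUnion fun s => W.F.le s _ (hE s), fun m => ?_⟩
  -- an `A_n`-visit at time `s` precedes `σ_n ≤ η_{n+1}`
  have : W.eventA n ∩ {ω | W.eta (n + 1) ω ≤ m} =
      ⋃ s < m, E s ∩ {ω | W.eta (n + 1) ω ≤ m} := by
    ext ω
    simp only [hA, Set.mem_inter_iff, Set.mem_iUnion, Set.mem_ofPred_eq, E, exists_prop]
    constructor
    · rintro ⟨⟨s, hs⟩, hm⟩
      exact ⟨s, Nat.cast_lt.1 (hs.2.1.trans_le ((W.sigma_le_eta_succ n ω).trans hm)), hs, hm⟩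
    · rintro ⟨s, -, hs, hm⟩
      exact ⟨⟨s, hs⟩, hm⟩
  rw [this]
  exact .biUnion (Set.to_countable _) fun s hs =>
    (W.F.mono (le_of_lt hs) _ (hE s)).inter (W.isStoppingTime_eta (n + 1) m)

theorem ae_finite_setOf_mem_eventA [IsFiniteMeasure μ] :
    ∀ᵐ ω ∂μ, (∑' n, ENNReal.ofReal (W.p n ω)) ≠ ⊤ →
      {n | ω ∈ W.eventA n}.Finite := by
  let ℱ := stoppedFiltration W.F (fun n => W.eta (n + 1)) (fun n => W.isStoppingTime_eta (n + 1))
    fun _ _ h => W.monotone_eta (Nat.succ_le_succ h)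
  filter_upwards [ae_mem_limsup_atTop_iff (ℱ := ℱ) μ W.measurableSet_eventA,
    ae_all_iff.2 W.p_nonneg] with ω hlevy hp hS
  have hsum : Summable fun n => W.p n ω := by
    simpa [ENNReal.toReal_ofReal (hp _)] using ENNReal.summable_toReal hS
  -- in Lévy's criterion, `μ[1_{A_{k+1}} | ℱ k]` is `p_{k+1}` by definition
  have hlimsup : ω ∉ limsup W.eventA atTop := fun hmem =>
    not_tendsto_atTop_of_tendsto_nhds ((summable_nat_add_iff 1).2 hsum).hasSum.tendsto_sum_nat
      (hlevy.1 hmem)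
  simpa [mem_limsup_iff_frequently_mem, Nat.frequently_atTop_iff_infinite] using hlimsup

lemma measurableSet_cylinder (t₀ : ℕ) {u v : V} (w : Gbar.Walk u v) :
    MeasurableSet[W.F (t₀ + w.length)] (W.cylinder t₀ w) := by
  simp only [cylinder, Set.ofPred_and, Set.ofPred_forall]
  exact (MeasurableSet.iInter fun i => .iInter fun hi =>
      W.F.mono (by omega) _ (W.X_adapted _ _)).inter
    (.iInter fun i => .iInter fun hi =>
      (W.measurableSet_X_mem_boundary (by omega) (by omega)).compl)

lemma measure_cylinder_le_walkWeight [IsProbabilityMeasure μ] (t₀ : ℕ) {u v : V}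
    (w : Gbar.Walk u v) : μ (W.cylinder t₀ w) ≤ walkWeight Gbar w := by
  induction w using Walk.concatRec with
  | Hnil => simpa [walkWeight_nil] using prob_le_one
  | @Hconcat u x z p h ih =>
    set A := W.cylinder t₀ p ∩
      {ω | W.X (t₀ + p.length) ω ∉ Boundary Gbar (W.G (t₀ + p.length) ω)}
    have hA : MeasurableSet[W.F (t₀ + p.length)] A :=
      (W.measurableSet_cylinder t₀ p).inter (W.measurableSet_X_mem_boundary le_rfl le_rfl).compl
    have hgetVert : ∀ i ≤ p.length, (p.concat h).getVert i = p.getVert i := fun i hi => by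
      rw [Walk.concat_eq_append, Walk.getVert_append', if_pos hi]
    have hsub : W.cylinder t₀ (p.concat h) ⊆ A ∩ {ω | W.X (t₀ + p.length + 1) ω = z} := by
      rintro ω ⟨hX, hb⟩
      simp only [Walk.length_concat] at hX hb
      refine ⟨⟨⟨fun i hi => (hX i (by omega)).trans (hgetVert i hi),
        fun i hi => hb i (by omega)⟩, hb _ (by omega)⟩, ?_⟩
      exact (hX _ le_rfl).trans (by simpa using (p.concat h).getVert_length)
    have hbound : ∀ ω ∈ A, (W.G (t₀ + p.length) ω).Adj (W.X (t₀ + p.length) ω) z →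
        (((W.G (t₀ + p.length) ω).neighborSet (W.X (t₀ + p.length) ω)).ncard : ℝ)⁻¹ ≤
          ((Gbar.neighborSet x).ncard : ℝ)⁻¹ := by
      rintro ω ⟨⟨hX, -⟩, hb⟩ -
      have hx : W.X (t₀ + p.length) ω = x := (hX _ le_rfl).trans p.getVert_length
      have hv := W.X_mem ω (t₀ + p.length)
      simp only [Set.mem_ofPred_eq] at hb
      rw [hx] at hv hb
      have hN : (W.G (t₀ + p.length) ω).neighborSet x = Gbar.neighborSet x :=
        Set.ext fun y => ⟨fun hy => (W.G _ ω).adj_sub hy, adj_of_notMem_boundary hv hb⟩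
      rw [hx, hN]
    calc μ (W.cylinder t₀ (p.concat h))
        ≤ μ (A ∩ {ω | W.X (t₀ + p.length + 1) ω = z}) := measure_mono hsub
      _ ≤ ENNReal.ofReal ((Gbar.neighborSet x).ncard : ℝ)⁻¹ * μ A :=
          W.measure_inter_X_succ_eq_le hA (by positivity) hbound
      _ ≤ ((Gbar.neighborSet x).ncard : ℝ≥0∞)⁻¹ * walkWeight Gbar p := by
          gcongr
          · exact ENNReal.ofReal_inv_le.trans_eq (by rw [ENNReal.ofReal_natCast])
          · exact (measure_mono Set.inter_subset_left).trans ih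
      _ = walkWeight Gbar (p.concat h) := by rw [walkWeight_concat, mul_comm]

theorem ae_finite_visits_of_forall_notMem_boundary [IsProbabilityMeasure μ]
    (htrans : SRWTransient Gbar o) (t₀ : ℕ) :
    ∀ᵐ ω ∂μ, W.X t₀ ω = o → (∀ s ≥ t₀, W.X s ω ∉ Boundary Gbar (W.G s ω)) →
      {t | W.X t ω = o}.Finite := by
  set E : ℕ → Set Ω := fun k =>
    ⋃ w : {w : Gbar.Walk o o // w.length = k}, W.cylinder t₀ w.1
  have hE : ∑' k, μ (E k) ≠ ⊤ := by
    refine ne_top_of_le_ne_top (ENNReal.inv_ne_top.2 (tsub_pos_of_lt htrans).ne') ?_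
    calc ∑' k, μ (E k)
        ≤ ∑' k, ∑' w : {w : Gbar.Walk o o // w.length = k}, walkWeight Gbar w.1 :=
          ENNReal.tsum_le_tsum fun k => (measure_iUnion_le _).trans
            (ENNReal.tsum_le_tsum fun w => W.measure_cylinder_le_walkWeight t₀ w.1)
      _ = ∑' w : Gbar.Walk o o, walkWeight Gbar w := by
          rw [← ENNReal.tsum_sigma]
          exact (Equiv.sigmaFiberEquiv Walk.length).tsum_eq (walkWeight Gbar)
      _ ≤ (1 - returnProb Gbar o)⁻¹ := tsum_walkWeight_le_inv_one_sub_returnProb htrans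
  filter_upwards [ae_finite_setOfPred_mem hE, W.ae_adj_X_succ] with ω hfin hadj hstart hb
  refine ((Set.finite_Iio t₀).union (hfin.image (t₀ + ·))).subset fun t ht => ?_
  rcases lt_or_ge t t₀ with hlt | hle
  · exact Or.inl hlt
  obtain ⟨k, rfl⟩ := Nat.exists_eq_add_of_le hle
  obtain ⟨w, hlen, hw⟩ := exists_walk_getVert_eq (fun i => W.X (t₀ + i) ω) k
    fun i _ => (W.G _ ω).adj_sub (hadj (t₀ + i))
  refine Or.inr
    ⟨k, Set.mem_iUnion.2 ⟨⟨w.copy hstart ht, by simpa using hlen⟩, ?_, ?_⟩, rfl⟩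
  · intro i hi
    simp only [Walk.length_copy, Walk.getVert_copy] at hi ⊢
    exact (hw i (by omega)).symm
  · intro i _
    exact hb _ (by omega)

end LocallyFinite

end Countable

variable {ω : Ω}

lemma X_eta_notMem_boundary {n j : ℕ} (hj : W.eta n ω = j) :
    W.X j ω ∉ Boundary Gbar (W.G j ω) := by
  cases n with
  | zero =>
    obtain rfl : j = 0 := by exact_mod_cast hj.symm.trans (W.eta_zero ω)
    rw [W.X_zero ω]
    exact W.start_notMem_boundary ω 0
  | succ n => exact (mem_of_sInf_image_natCast_eq hj).2

lemma eta_lt_sigma {n : ℕ} (hη : W.eta n ω ≠ ⊤) : W.eta n ω < W.sigma n ω := by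
  obtain ⟨j, hj⟩ := ENat.ne_top_iff_exists.1 hη
  refine (W.eta_le_sigma n ω).lt_of_ne fun hσ => W.X_eta_notMem_boundary hj.symm ?_
  rw [sigma_eq_sigmaOf] at hσ
  have hmem := (mem_of_sInf_image_natCast_eq (hσ.symm.trans hj.symm)).2
  rwa [← hj, ENat.toNat_natCast] at hmem

lemma natCast_le_eta (n : ℕ) : (n : ℕ∞) ≤ W.eta n ω := by
  induction n with
  | zero => exact zero_le
  | succ n ih =>
    by_cases hη : W.eta n ω = ⊤
    · exact le_top.trans_eq ((top_le_iff.1 (hη ▸ W.monotone_eta n.le_succ ω)).symm)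
    · exact_mod_cast Order.add_one_le_of_lt
        (ih.trans_lt ((W.eta_lt_sigma hη).trans_le (W.sigma_le_eta_succ n ω)))

lemma exists_eta_le_lt_sigma {t : ℕ} (ht : W.X t ω ∉ Boundary Gbar (W.G t ω)) :
    ∃ n, W.eta n ω ≤ t ∧ (t : ℕ∞) < W.sigma n ω := by
  set n := Nat.findGreatest (fun n => W.eta n ω ≤ t) t
  have hn : W.eta n ω ≤ t := Nat.findGreatest_spec (P := fun n => W.eta n ω ≤ t)
    (Nat.zero_le t) (by rw [eta_zero]; exact zero_le)
  have hn' : ¬ W.eta (n + 1) ω ≤ t := by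
    by_cases hnt : n + 1 ≤ t
    · exact Nat.findGreatest_is_greatest n.lt_succ_self hnt
    · exact fun h => hnt (Nat.cast_le.1 ((W.natCast_le_eta (n + 1)).trans h))
  -- if `σ_n ≤ t`, the time `t` would qualify for `η_{n+1}`
  refine ⟨n, hn, lt_of_not_ge fun hσ => hn' ?_⟩
  exact sInf_le (Set.mem_image_of_mem _ ⟨hσ, ht⟩)

lemma exists_eta_ne_top_sigma_eq_top (hvisits : {t | W.X t ω = o}.Infinite)
    (hA : {n | ω ∈ W.eventA n}.Finite) : ∃ n, W.eta n ω ≠ ⊤ ∧ W.sigma n ω = ⊤ := by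
  by_contra! h
  refine hvisits ((hA.biUnion fun n _ => Set.finite_Iio (W.sigma n ω).toNat).subset
    fun t ht => ?_)
  have ht' : W.X t ω = o := ht
  obtain ⟨n, hηt, htσ⟩ :=
    W.exists_eta_le_lt_sigma (by rw [ht']; exact W.start_notMem_boundary ω t)
  refine Set.mem_biUnion (x := n) ⟨t, hηt, htσ, ht'⟩ ?_
  have hσ := h n (ne_top_of_le_ne_top (ENat.natCast_ne_top t) hηt)
  rw [← ENat.natCast_toNat hσ] at htσ
  exact Nat.cast_lt.1 htσ

lemma notMem_boundary_of_sigma_eq_top [Gbar.LocallyFinite]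
    (hadj : ∀ t, (W.G t ω).Adj (W.X t ω) (W.X (t + 1) ω)) {n T : ℕ} (hη : W.eta n ω = T)
    (hσ : W.sigma n ω = ⊤) {s : ℕ} (hs : T ≤ s) :
    W.X s ω ∉ Boundary Gbar (W.G s ω) := by
  have hb : ∀ s ≥ T, W.X s ω ∉ Boundary Gbar (W.G T ω) := by
    intro s hs hmem
    have hle : W.sigma n ω ≤ s := by
      rw [sigma_eq_sigmaOf]
      refine sInf_le (Set.mem_image_of_mem _ ?_)
      simp only [Set.mem_ofPred_eq, hη, ENat.toNat_natCast]
      exact ⟨Nat.cast_le.2 hs, hmem⟩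
    rw [hσ, top_le_iff] at hle
    exact ENat.natCast_ne_top s hle
  -- off `∂G_T`, every edge of `Ḡ` at a vertex of `G_T` lies in `G_T`: the walk stays in `G_T`
  have hverts : ∀ s ≥ T, W.X s ω ∈ (W.G T ω).verts := by
    intro s hs
    induction s, hs using Nat.le_induction with
    | base => exact W.X_mem ω T
    | succ s hs ih =>
      exact (adj_of_notMem_boundary ih (hb s hs) ((W.G s ω).adj_sub (hadj s))).snd_mem
  exact notMem_boundary_of_le (W.monotone_G ω hs) (hverts s hs) (hb s hs)

end GrowingSRW

theorem srw_growing_transient_of_sum_condProb_lt_top_general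
    {V : Type*} (Gbar : SimpleGraph V) (o : V)
    (hlf : Gbar.LocallyFinite) (hconn : Gbar.Connected)
    (htrans : SRWTransient Gbar o)
    {Ω : Type*} (mΩ : MeasurableSpace Ω) (μ : Measure Ω) [IsProbabilityMeasure μ]
    (W : GrowingSRW Gbar o mΩ μ) :
    ∀ᵐ ω ∂μ, (∑' n : ℕ, ENNReal.ofReal (W.p n ω)) ≠ ⊤ →
      {t | W.X t ω = o}.Finite := by
  have := countable_of_locallyFinite_of_connected hconn
  filter_upwards [W.ae_finite_setOf_mem_eventA, W.ae_adj_X_succ,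
    ae_all_iff.2 fun t₀ => W.ae_finite_visits_of_forall_notMem_boundary htrans t₀]
    with ω hA hadj hvisits hS
  refine Set.not_infinite.1 fun hinf => ?_
  obtain ⟨n, hη, hσ⟩ := W.exists_eta_ne_top_sigma_eq_top hinf (hA hS)
  obtain ⟨T, hT⟩ := ENat.ne_top_iff_exists.1 hη
  obtain ⟨t₀, ht₀, hTt₀⟩ := hinf.exists_gt T
  exact hinf (hvisits t₀ ht₀ fun s hs =>
    W.notMem_boundary_of_sigma_eq_top hadj hT.symm hσ (hTt₀.le.trans hs))

/-- With `S = Σ_n p_n`, `p_n = P(A_n | F_{η_n})`,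
`A_n = {∃ s ∈ [η_n, σ_n) : X_s = 0}`, if simple random walk on the fixed graph `Ḡ` is
transient then, almost surely on the event `{S < ∞}`, the sample path of the simple
random walk on growing graphs is transient at `0`. -/
theorem srw_growing_transient_of_sum_condProb_lt_top
    {V : Type*} (Gbar : SimpleGraph V) (o : V)
    (hlf : Gbar.LocallyFinite) (hconn : Gbar.Connected) (hinf : Infinite V)
    (htrans : SRWTransient Gbar o)
    {Ω : Type*} (mΩ : MeasurableSpace Ω) (μ : Measure Ω) [IsProbabilityMeasure μ]
    (W : GrowingSRW Gbar o mΩ μ) :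
    ∀ᵐ ω ∂μ, (∑' n : ℕ, ENNReal.ofReal (W.p n ω)) ≠ ⊤ →
      {t | W.X t ω = o}.Finite :=
  srw_growing_transient_of_sum_condProb_lt_top_general Gbar o hlf hconn htrans mΩ μ W

end MonotoneWalk
end
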